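/- Let c be a classical solution of the convection–dispersion equation on [0, ℓ] and let c_eff : ℝ → ℝ. Suppose the exit mass balance holds on every sub-column adjacent to the outlet: for every a ∈ [0, ℓ) and every t, d/dt ∫ₐ^ℓ c(t,x) dx = (v·c(t,a) − D·∂x c(t,a)) − v·c_eff(t) + ∫ₐ^ℓ r(t,x) dx. Then the third-type exit condition holds: v·c_eff(t) = v·c(t,ℓ) − D·∂x c(t,ℓ) for all t. In other words, a third-type exit is a necessary condition of the conservation law. -/

import Mathlib

open Set

/-- `c` is a classical solution of the convection–dispersion equation
`∂t c = D·∂xx c − v·∂x c + r` on the column `[0, ℓ]`, where `ct`, `cx`, `cxx`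
denote the partial derivatives `∂t c`, `∂x c`, `∂xx c` (one-sided in the
space variable at the endpoints), and these together with `r` are continuous
on `ℝ × [0, ℓ]`. -/
structure IsCDESolution (D v ℓ : ℝ) (c ct cx cxx r : ℝ → ℝ → ℝ) : Prop where
  hasDeriv_x : ∀ t : ℝ, ∀ x ∈ Icc (0:ℝ) ℓ, HasDerivWithinAt (c t) (cx t x) (Icc 0 ℓ) x
  hasDeriv_xx : ∀ t : ℝ, ∀ x ∈ Icc (0:ℝ) ℓ, HasDerivWithinAt (cx t) (cxx t x) (Icc 0 ℓ) x
  hasDeriv_t : ∀ x ∈ Icc (0:ℝ) ℓ, ∀ t : ℝ, HasDerivAt (fun s => c s x) (ct t x) t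
  cont_ct : ContinuousOn (Function.uncurry ct) (univ ×ˢ Icc 0 ℓ)
  cont_cx : ContinuousOn (Function.uncurry cx) (univ ×ˢ Icc 0 ℓ)
  cont_cxx : ContinuousOn (Function.uncurry cxx) (univ ×ˢ Icc 0 ℓ)
  cont_r : ContinuousOn (Function.uncurry r) (univ ×ˢ Icc 0 ℓ)
  pde : ∀ t : ℝ, ∀ x ∈ Icc (0:ℝ) ℓ, ct t x = D * cxx t x - v * cx t x + r t x

/-! Integrating the equation over the column and applying the fundamental theorem of calculus
to `∂xx c` and `∂x c` gives the global mass balance, whose outlet flux is `v·c(t,ℓ) − D·∂x c(t,ℓ)`.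
The assumed balance on the sub-column `[0, ℓ]` computes the same time derivative with outlet
flux `v·c_eff(t)`, so uniqueness of derivatives identifies the two fluxes. -/

open MeasureTheory

section Calculus

variable {E : Type*} [NormedAddCommGroup E] [NormedSpace ℝ E]

theorem hasDerivAt_intervalIntegral_of_continuousOn {F F' : ℝ → ℝ → E} {a b : ℝ}
    (hF : ∀ t, ContinuousOn (F t) (uIcc a b))
    (hF' : ContinuousOn (Function.uncurry F') (univ ×ˢ uIcc a b))
    (hderiv : ∀ x ∈ uIcc a b, ∀ t, HasDerivAt (F · x) (F' t x) t) (t₀ : ℝ) :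
    HasDerivAt (fun t => ∫ x in a..b, F t x) (∫ x in a..b, F' t₀ x) t₀ := by
  obtain ⟨M, hM⟩ : ∃ M, ∀ p ∈ Icc (t₀ - 1) (t₀ + 1) ×ˢ uIcc a b, ‖Function.uncurry F' p‖ ≤ M :=
    (isCompact_Icc.prod isCompact_uIcc).exists_bound_of_continuousOn
      (hF'.mono (prod_mono (subset_univ _) subset_rfl))
  have hball : Metric.ball t₀ 1 ⊆ Icc (t₀ - 1) (t₀ + 1) := by
    rw [Real.ball_eq_Ioo]; exact Ioo_subset_Icc_self
  refine (intervalIntegral.hasDerivAt_integral_of_dominated_loc_of_deriv_le (bound := fun _ => M)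
    (Metric.ball_mem_nhds t₀ one_pos) (.of_forall fun t => ?_) ((hF t₀).intervalIntegrable)
    ?_ (.of_forall fun x hx t ht => hM (t, x) ⟨hball ht, uIoc_subset_uIcc hx⟩)
    intervalIntegrable_const (.of_forall fun x hx t _ => hderiv x (uIoc_subset_uIcc hx) t)).2
  · exact ((hF t).mono uIoc_subset_uIcc).aestronglyMeasurable measurableSet_uIoc
  · exact ((hF'.uncurry_left t₀ (mem_univ _)).mono uIoc_subset_uIcc).aestronglyMeasurable
      measurableSet_uIoc

theorem integral_eq_sub_of_hasDerivWithinAt_Icc [CompleteSpace E] {f f' : ℝ → E} {a b : ℝ}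
    (hab : a ≤ b) (hderiv : ∀ x ∈ Icc a b, HasDerivWithinAt f (f' x) (Icc a b) x)
    (hf' : ContinuousOn f' (Icc a b)) :
    ∫ x in a..b, f' x = f b - f a :=
  intervalIntegral.integral_eq_sub_of_hasDeriv_right_of_le hab
    (fun x hx => (hderiv x hx).continuousWithinAt)
    (fun x hx => ((hderiv x (Ioo_subset_Icc_self hx)).hasDerivAt
      (Icc_mem_nhds hx.1 hx.2)).hasDerivWithinAt)
    (hf'.intervalIntegrable_of_Icc hab)

end Calculus

namespace IsCDESolution

variable {D v ℓ : ℝ} {c ct cx cxx r : ℝ → ℝ → ℝ}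

theorem integral_ct (hsol : IsCDESolution D v ℓ c ct cx cxx r) (hℓ : 0 ≤ ℓ) (t : ℝ) :
    ∫ x in (0:ℝ)..ℓ, ct t x
      = D * (cx t ℓ - cx t 0) - v * (c t ℓ - c t 0) + ∫ x in (0:ℝ)..ℓ, r t x := by
  have hcx := hsol.cont_cx.uncurry_left t (mem_univ _)
  have hcxx := hsol.cont_cxx.uncurry_left t (mem_univ _)
  have hint_cx := hcx.intervalIntegrable_of_Icc (μ := volume) hℓ
  have hint_cxx := hcxx.intervalIntegrable_of_Icc (μ := volume) hℓ
  have hint_r :=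
    (hsol.cont_r.uncurry_left t (mem_univ _)).intervalIntegrable_of_Icc (μ := volume) hℓ
  calc ∫ x in (0:ℝ)..ℓ, ct t x
      = ∫ x in (0:ℝ)..ℓ, (D * cxx t x - v * cx t x + r t x) :=
        intervalIntegral.integral_congr fun x hx => hsol.pde t x (uIcc_of_le hℓ ▸ hx)
    _ = D * (∫ x in (0:ℝ)..ℓ, cxx t x) - v * (∫ x in (0:ℝ)..ℓ, cx t x)
          + ∫ x in (0:ℝ)..ℓ, r t x := by
        rw [intervalIntegral.integral_add
            ((hint_cxx.const_mul D).sub (hint_cx.const_mul v)) hint_r,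
          intervalIntegral.integral_sub (hint_cxx.const_mul D) (hint_cx.const_mul v),
          intervalIntegral.integral_const_mul, intervalIntegral.integral_const_mul]
    _ = D * (cx t ℓ - cx t 0) - v * (c t ℓ - c t 0) + ∫ x in (0:ℝ)..ℓ, r t x := by
        rw [integral_eq_sub_of_hasDerivWithinAt_Icc hℓ (hsol.hasDeriv_xx t) hcxx,
          integral_eq_sub_of_hasDerivWithinAt_Icc hℓ (hsol.hasDeriv_x t) hcx]

theorem hasDerivAt_integral (hsol : IsCDESolution D v ℓ c ct cx cxx r) (hℓ : 0 ≤ ℓ) (t : ℝ) :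
    HasDerivAt (fun s => ∫ x in (0:ℝ)..ℓ, c s x)
      ((v * c t 0 - D * cx t 0) - (v * c t ℓ - D * cx t ℓ) + ∫ x in (0:ℝ)..ℓ, r t x) t := by
  have hIcc : uIcc 0 ℓ = Icc 0 ℓ := uIcc_of_le hℓ
  have hmass := hasDerivAt_intervalIntegral_of_continuousOn
    (fun s x hx => (hsol.hasDeriv_x s x (hIcc ▸ hx)).continuousWithinAt.mono hIcc.le)
    (hIcc ▸ hsol.cont_ct) (fun x hx => hsol.hasDeriv_t x (hIcc ▸ hx)) t
  refine hmass.congr_deriv ?_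
  rw [hsol.integral_ct hℓ t]
  ring

end IsCDESolution

theorem cde_third_type_exit_necessary_general
    (D v ℓ : ℝ) (hℓ : 0 < ℓ)
    (c ct cx cxx r : ℝ → ℝ → ℝ) (ceff : ℝ → ℝ)
    (hsol : IsCDESolution D v ℓ c ct cx cxx r)
    (hbal : ∀ a ∈ Ico (0:ℝ) ℓ, ∀ t : ℝ,
      HasDerivAt (fun s : ℝ => ∫ x in a..ℓ, c s x)
        ((v * c t a - D * cx t a) - v * ceff t + ∫ x in a..ℓ, r t x) t) :
    ∀ t : ℝ, v * ceff t = v * c t ℓ - D * cx t ℓ := by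
  intro t
  have hflux := (hsol.hasDerivAt_integral hℓ.le t).unique (hbal 0 ⟨le_rfl, hℓ⟩ t)
  linarith

/-- A third-type exit is a necessary condition of the conservation law:
if the mass balance with effluent flux `v·c_eff(t)` holds on every sub-column
`[a, ℓ]` adjacent to the outlet, then `v·c_eff(t) = v·c(t,ℓ) − D·∂x c(t,ℓ)`
for all `t`. -/
theorem cde_third_type_exit_necessary
    (D v ℓ : ℝ) (hD : 0 < D) (hv : 0 < v) (hℓ : 0 < ℓ)
    (c ct cx cxx r : ℝ → ℝ → ℝ) (ceff : ℝ → ℝ)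
    (hsol : IsCDESolution D v ℓ c ct cx cxx r)
    (hbal : ∀ a ∈ Ico (0:ℝ) ℓ, ∀ t : ℝ,
      HasDerivAt (fun s : ℝ => ∫ x in a..ℓ, c s x)
        ((v * c t a - D * cx t a) - v * ceff t + ∫ x in a..ℓ, r t x) t) :
    ∀ t : ℝ, v * ceff t = v * c t ℓ - D * cx t ℓ :=
  cde_third_type_exit_necessary_general D v ℓ hℓ c ct cx cxx r ceff hsol hbal
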